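/- arXiv:0810.4185 — 7 statements merged into one kernel-verified Lean document; each statement's English description precedes it below -/
import Mathlib

section
/- Let m ≥ 1 be an integer and define r_α(λ) = α^m/(α+λ)^m for α > 0 and λ ≥ 0. Then for all 0 < α ≤ β and λ ≥ 0, r_β(λ) - r_α(λ) ≤ √m · √(λ/α) · r_β(λ). -/
theorem stmt_2 (m : ℕ) (hm : 1 ≤ m) (r : ℝ → ℝ → ℝ)
    (hr : ∀ α l : ℝ, 0 < α → 0 ≤ l → r α l = α ^ m / (α + l) ^ m)
    (α β l : ℝ) (hα : 0 < α) (hαβ : α ≤ β) (hl : 0 ≤ l) :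
    r β l - r α l ≤ Real.sqrt m * Real.sqrt (l / α) * r β l := by
  have hβ : 0 < β := hα.trans_le hαβ
  rw [hr α l hα hl, hr β l hβ hl]
  set t : ℝ := α * (β + l) / (β * (α + l)) with ht
  have hαl : 0 < α + l := by positivity
  have hβl : 0 < β + l := by positivity
  have htpos : 0 < t := by positivity
  have ht1 : t ≤ 1 := by
    rw [ht, div_le_one (by positivity)]
    nlinarith
  have hx : α / (α + l) = β / (β + l) * t := by
    rw [ht]; field_simp
  have key : α ^ m / (α + l) ^ m = β ^ m / (β + l) ^ m * t ^ m := by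
    rw [← div_pow, hx, mul_pow, div_pow]
  rw [key]
  have hR : (0:ℝ) ≤ β ^ m / (β + l) ^ m := by positivity
  -- Bernoulli: t^m ≥ 1 + m (t - 1)
  have hbern : 1 + (m : ℝ) * (t - 1) ≤ t ^ m := by
    have h := one_add_mul_le_pow (by nlinarith : (-2:ℝ) ≤ t - 1) m
    have he : (1:ℝ) + (t - 1) = t := by ring
    rwa [he] at h
  have htm1 : t ^ m ≤ 1 := pow_le_one₀ htpos.le ht1
  have htm0 : 0 ≤ t ^ m := by positivity
  -- 1 - t ≤ l / α
  have key2 : (1 - t) * (β * (α + l)) = (β - α) * l := by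
    rw [ht]; field_simp; ring
  have h1tla : 1 - t ≤ l / α := by
    rw [le_div_iff₀ hα]
    nlinarith [key2, mul_pos hβ hαl, mul_nonneg hl hl,
      mul_nonneg (mul_nonneg hl hl) hβ.le, mul_nonneg (mul_nonneg hl hα.le) hα.le]
  have h1t : (m:ℝ) * (1 - t) ≤ (m:ℝ) * (l / α) :=
    mul_le_mul_of_nonneg_left h1tla (Nat.cast_nonneg m)
  set s : ℝ := Real.sqrt m * Real.sqrt (l / α) with hs
  have hs0 : 0 ≤ s := by positivity
  have hs2 : s ^ 2 = (m : ℝ) * (l / α) := by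
    rw [hs, mul_pow, Real.sq_sqrt (Nat.cast_nonneg m), Real.sq_sqrt (by positivity)]
  have hmain : 1 - t ^ m ≤ s := by
    nlinarith [sq_nonneg (1 - t ^ m - s), sq_nonneg (1 - t ^ m)]
  nlinarith [mul_le_mul_of_nonneg_left hmain hR]
end

section
/- Define r_α(λ) = (1-λ)^(⌊1/α⌋+1) for α > 0 and λ ∈ [0, 1/2]. Then for any 0 < α ≤ β and λ ∈ [0, 1/2], r_β(λ) - r_α(λ) ≤ √(λ/α) · r_β(λ). -/
theorem stmt_3 (r : ℝ → ℝ → ℝ)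
    (hr : ∀ α l : ℝ, 0 < α → l ∈ Set.Icc (0:ℝ) (1/2) →
      r α l = (1 - l) ^ (⌊1/α⌋₊ + 1))
    (α β l : ℝ) (hα : 0 < α) (hαβ : α ≤ β) (hl : l ∈ Set.Icc (0:ℝ) (1/2)) :
    r β l - r α l ≤ Real.sqrt (l / α) * r β l := by
  obtain ⟨hl0, hl2⟩ := hl
  have hβ : 0 < β := lt_of_lt_of_le hα hαβ
  rw [hr α l hα ⟨hl0, hl2⟩, hr β l hβ ⟨hl0, hl2⟩]
  set x := 1 - l with hx
  have hx0 : 0 ≤ x := by simp only [hx]; linarith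
  have hfl : ⌊1/β⌋₊ ≤ ⌊1/α⌋₊ := Nat.floor_le_floor (by gcongr)
  set m := ⌊1/β⌋₊ + 1 with hm
  set n := ⌊1/α⌋₊ + 1 with hn
  have hmn : m ≤ n := by omega
  have hfac : x ^ m - x ^ n = x ^ m * (1 - x ^ (n - m)) := by
    rw [mul_sub, mul_one, ← pow_add]
    congr 2
    omega
  rw [hfac, mul_comm]
  apply mul_le_mul_of_nonneg_right _ (pow_nonneg hx0 m)
  rcases le_or_gt α l with h | h
  · have h1 : (1:ℝ) ≤ l / α := (one_le_div hα).mpr h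
    have hs1 : (1:ℝ) ≤ Real.sqrt (l/α) := by
      rw [show (1:ℝ) = Real.sqrt 1 from (Real.sqrt_one).symm]
      exact Real.sqrt_le_sqrt h1
    have hpn : 0 ≤ x ^ (n-m) := pow_nonneg hx0 _
    linarith
  · have hla : l / α ≤ 1 := by
      rw [div_le_one hα]; linarith
    have hla0 : 0 ≤ l / α := div_nonneg hl0 hα.le
    have hb : 1 - (n - m : ℕ) * l ≤ x ^ (n - m) := by
      have := one_add_mul_le_pow (a := -l) (by linarith) (n - m)
      simpa [hx, mul_comm, sub_eq_add_neg] using this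
    have hk : ((n - m : ℕ) : ℝ) * l ≤ l / α := by
      have h1 : ((n - m : ℕ) : ℝ) ≤ (⌊1/α⌋₊ : ℝ) := by
        have : n - m ≤ ⌊1/α⌋₊ := by omega
        exact_mod_cast this
      have h2 : (⌊1/α⌋₊ : ℝ) ≤ 1/α := Nat.floor_le (by positivity)
      calc ((n-m:ℕ):ℝ) * l ≤ (1/α) * l :=
            mul_le_mul_of_nonneg_right (h1.trans h2) hl0
        _ = l / α := by ring
    have hsq : l / α ≤ Real.sqrt (l/α) := by
      nlinarith [Real.sq_sqrt hla0, Real.sqrt_nonneg (l/α),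
        Real.sqrt_le_one.mpr hla]
    linarith
end

section
/- Let A be a bounded self-adjoint nonnegative operator on a Hilbert space with ‖A‖ ≤ 1, let j ≥ 0 be an integer and ν ≥ 0 a real number. Then ‖(I - A)^j A^ν‖ ≤ ν^ν (j+ν)^(-ν). -/
lemma scalar_bound_aux (j : ℕ) {ν : ℝ} (hν : 0 ≤ ν) {l : ℝ} (h0 : 0 ≤ l) (h1 : l ≤ 1) :
    (1 - l) ^ j * l ^ ν ≤ ν ^ ν * ((j : ℝ) + ν) ^ (-ν) := by
  rcases hν.eq_or_lt with rfl | hν'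
  · simp only [Real.rpow_zero, mul_one, neg_zero, one_mul]
    exact pow_le_one₀ (by linarith) (by linarith)
  · have hjν : 0 < (j : ℝ) + ν := by positivity
    have hRHS : ν ^ ν * ((j : ℝ) + ν) ^ (-ν) = (ν / ((j : ℝ) + ν)) ^ ν := by
      rw [Real.div_rpow hν hjν.le, Real.rpow_neg hjν.le, div_eq_mul_inv]
    rw [hRHS]
    rcases h0.eq_or_lt with rfl | hl
    · rw [Real.zero_rpow hν'.ne', mul_zero]
      positivity
    · set t : ℝ := ((j : ℝ) + ν) * l / ν with ht
      have htpos : 0 < t := by positivity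
      have hc : 0 ≤ ν / ((j : ℝ) + ν) := by positivity
      have hlt : l = ν / ((j : ℝ) + ν) * t := by
        rw [ht]
        field_simp
      have hmul : l ^ ν = (ν / ((j : ℝ) + ν)) ^ ν * t ^ ν := by
        rw [hlt, Real.mul_rpow hc htpos.le]
      have hA : (1 - l) ^ j ≤ Real.exp (-l) ^ j :=
        pow_le_pow_left₀ (by linarith) (by linarith [Real.add_one_le_exp (-l)]) j
      have hB : t ^ ν ≤ Real.exp (t - 1) ^ ν :=
        Real.rpow_le_rpow htpos.le (by linarith [Real.add_one_le_exp (t - 1)]) hν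
      have hcν : (0 : ℝ) ≤ (ν / ((j : ℝ) + ν)) ^ ν := Real.rpow_nonneg hc ν
      calc (1 - l) ^ j * l ^ ν
          = (1 - l) ^ j * ((ν / ((j : ℝ) + ν)) ^ ν * t ^ ν) := by rw [hmul]
        _ ≤ Real.exp (-l) ^ j * ((ν / ((j : ℝ) + ν)) ^ ν * Real.exp (t - 1) ^ ν) := by
            apply mul_le_mul hA (mul_le_mul_of_nonneg_left hB hcν)
            · exact mul_nonneg hcν (Real.rpow_nonneg htpos.le ν)
            · positivity
        _ = (ν / ((j : ℝ) + ν)) ^ ν * (Real.exp ((j : ℝ) * -l) * Real.exp ((t - 1) * ν)) := by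
            rw [← Real.exp_nat_mul, ← Real.exp_mul]
            ring
        _ ≤ (ν / ((j : ℝ) + ν)) ^ ν * 1 := by
            apply mul_le_mul_of_nonneg_left _ hcν
            rw [← Real.exp_add]
            have hexp : (j : ℝ) * -l + (t - 1) * ν = ν * l - ν := by
              have hνt : t * ν = ((j : ℝ) + ν) * l := by
                rw [ht]
                field_simp
              rw [sub_mul, hνt]
              ring
            rw [hexp]
            calc Real.exp (ν * l - ν) ≤ Real.exp 0 := by
                  apply Real.exp_le_exp.mpr
                  nlinarith
              _ = 1 := Real.exp_zero
        _ = (ν / ((j : ℝ) + ν)) ^ ν := mul_one _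

set_option maxHeartbeats 800000 in
theorem stmt_8 {H : Type*} [NormedAddCommGroup H] [InnerProductSpace ℂ H]
    [CompleteSpace H] (A : H →L[ℂ] H)
    (hsa : IsSelfAdjoint A) (hpos : (0 : H →L[ℂ] H) ≤ A) (hnorm : ‖A‖ ≤ 1)
    (j : ℕ) (ν : ℝ) (hν : 0 ≤ ν) :
    ‖(1 - A) ^ j * cfc (fun x : ℝ => x ^ ν) A‖ ≤ ν ^ ν * ((j : ℝ) + ν) ^ (-ν) := by
  have hRHS0 : 0 ≤ ν ^ ν * ((j : ℝ) + ν) ^ (-ν) := by positivity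
  rcases subsingleton_or_nontrivial H with hH | hH
  · rw [Subsingleton.elim ((1 - A) ^ j * cfc (fun x : ℝ => x ^ ν) A) 0, norm_zero]
    exact hRHS0
  · have hcont : Continuous (fun x : ℝ => x ^ ν) := Real.continuous_rpow_const hν
    have hspec : spectrum ℝ A ⊆ Set.Icc (0 : ℝ) 1 := by
      intro x hx
      refine ⟨spectrum_nonneg_of_nonneg hpos hx, ?_⟩
      calc x ≤ |x| := le_abs_self x
        _ = ‖x‖ := rfl
        _ ≤ ‖A‖ := spectrum.norm_le_norm_of_mem hx
        _ ≤ 1 := hnorm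
    have h1A : (1 : H →L[ℂ] H) - A = cfc (fun x : ℝ => 1 - x) A := by
      rw [cfc_sub (fun _ : ℝ => (1 : ℝ)) (fun x : ℝ => x) A continuousOn_const
        continuous_id.continuousOn, cfc_const_one ℝ A, cfc_id' ℝ A]
    have key : (1 - A) ^ j * cfc (fun x : ℝ => x ^ ν) A
        = cfc (fun x : ℝ => (1 - x) ^ j * x ^ ν) A := by
      rw [h1A, ← cfc_pow (fun x : ℝ => 1 - x) j A (by fun_prop),
        ← cfc_mul _ _ A (by fun_prop) hcont.continuousOn]
    rw [key]
    refine norm_cfc_le hRHS0 fun x hx => ?_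
    obtain ⟨h0, h1⟩ := hspec hx
    rw [Real.norm_of_nonneg (mul_nonneg (pow_nonneg (by linarith) j) (Real.rpow_nonneg h0 ν))]
    exact scalar_bound_aux j hν h0 h1
end

section
/- Let A be a bounded self-adjoint nonnegative operator with ‖A‖ ≤ 1, let n ≥ 1 be an integer, α > 0, and 0 ≤ ν ≤ n. Define r_{α,n}(A) = (I + A/(nα))^(-n). Then ‖r_{α,n}(A) A^ν‖ ≤ ν^ν α^ν. -/
lemma key_rpow_bound (n : ℕ) (hn : 1 ≤ n) (α : ℝ) (hα : 0 < α) (ν : ℝ) (hν0 : 0 ≤ ν)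
    (hνn : ν ≤ n) (x : ℝ) (hx : 0 ≤ x) :
    x ^ ν ≤ ν ^ ν * α ^ ν * (1 + x / (n * α)) ^ n := by
  have hn' : (0:ℝ) < n := by exact_mod_cast hn
  have hb : (1:ℝ) ≤ 1 + x / (n * α) := le_add_of_nonneg_right (div_nonneg hx (by positivity))
  rcases eq_or_lt_of_le hν0 with h0 | hν
  · rw [← h0]
    simp only [Real.rpow_zero, one_mul]
    exact one_le_pow₀ hb
  · have hνα : (0:ℝ) < ν * α := by positivity
    set a := x / (ν * α) with ha
    have ha0 : 0 ≤ a := div_nonneg hx hνα.le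
    have h1 : a ^ (ν / n) ≤ 1 + x / (n * α) := by
      have hgm := Real.geom_mean_le_arith_mean2_weighted
        (w₁ := ν / n) (w₂ := 1 - ν / n) (p₁ := a) (p₂ := 1)
        (by positivity) (sub_nonneg.mpr ((div_le_one hn').mpr hνn)) ha0 zero_le_one
        (by ring)
      calc a ^ (ν / n) = a ^ (ν / n) * (1:ℝ) ^ (1 - ν / n) := by
            rw [Real.one_rpow, mul_one]
        _ ≤ ν / n * a + (1 - ν / n) * 1 := hgm
        _ = 1 + x / (n * α) - ν / n := by
            rw [ha]; field_simp; ring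
        _ ≤ 1 + x / (n * α) := by
            have : (0:ℝ) ≤ ν / n := by positivity
            linarith
    have h2 : a ^ ν ≤ (1 + x / (n * α)) ^ n := by
      have hp := pow_le_pow_left₀ (Real.rpow_nonneg ha0 _) h1 n
      rwa [← Real.rpow_natCast (a ^ (ν / n)) n, ← Real.rpow_mul ha0,
        div_mul_cancel₀ _ (by positivity : (n:ℝ) ≠ 0)] at hp
    calc x ^ ν = (ν * α) ^ ν * a ^ ν := by
          rw [← Real.mul_rpow hνα.le ha0, ha, mul_div_cancel₀ x hνα.ne']
      _ ≤ (ν * α) ^ ν * (1 + x / (n * α)) ^ n :=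
          mul_le_mul_of_nonneg_left h2 (Real.rpow_nonneg hνα.le _)
      _ = ν ^ ν * α ^ ν * (1 + x / (n * α)) ^ n := by
          rw [Real.mul_rpow hν.le hα.le]

theorem stmt_9 {H : Type*} [NormedAddCommGroup H] [InnerProductSpace ℂ H]
    [CompleteSpace H] (A : H →L[ℂ] H)
    (hsa : IsSelfAdjoint A) (hpos : (0 : H →L[ℂ] H) ≤ A) (hnorm : ‖A‖ ≤ 1)
    (n : ℕ) (hn : 1 ≤ n) (α : ℝ) (hα : 0 < α) (ν : ℝ) (hν0 : 0 ≤ ν) (hνn : ν ≤ n) :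
    ‖cfc (fun x : ℝ => ((1 + x / (n * α)) ^ n)⁻¹) A * cfc (fun x : ℝ => x ^ ν) A‖ ≤
      ν ^ ν * α ^ ν := by
  have hn' : (0:ℝ) < n := by exact_mod_cast hn
  have hsp : ∀ x ∈ spectrum ℝ A, 0 ≤ x := fun x hx => spectrum_nonneg_of_nonneg hpos hx
  have hbpos : ∀ x ∈ spectrum ℝ A, (0:ℝ) < 1 + x / (n * α) := fun x hx => by
    have := hsp x hx; positivity
  have hcont1 : ContinuousOn (fun x : ℝ => ((1 + x / (n * α)) ^ n)⁻¹) (spectrum ℝ A) := by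
    apply ContinuousOn.inv₀
    · fun_prop
    · exact fun x hx => (pow_pos (hbpos x hx) n).ne'
  have hcont2 : ContinuousOn (fun x : ℝ => x ^ ν) (spectrum ℝ A) :=
    (Real.continuous_rpow_const hν0).continuousOn
  rw [← cfc_mul _ _ A hcont1 hcont2]
  have hc : (0:ℝ) ≤ ν ^ ν * α ^ ν :=
    mul_nonneg (Real.rpow_nonneg hν0 _) (Real.rpow_nonneg hα.le _)
  apply norm_cfc_le hc
  intro x hx
  have hx0 := hsp x hx
  have hbp : (0:ℝ) < (1 + x / (n * α)) ^ n := pow_pos (hbpos x hx) n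
  rw [Real.norm_eq_abs, abs_of_nonneg (mul_nonneg (inv_nonneg.mpr hbp.le) (Real.rpow_nonneg hx0 _)),
    inv_mul_eq_div, div_le_iff₀ hbp]
  calc x ^ ν ≤ ν ^ ν * α ^ ν * (1 + x / (n * α)) ^ n :=
        key_rpow_bound n hn α hα ν hν0 hνn x hx0
    _ = ν ^ ν * α ^ ν * (1 + x / (n * α)) ^ n := rfl
end

section
/- Let {g_α}_{α>0} be a family of piecewise continuous functions on [0,1/2] with residual function r_α(λ) = 1 - λ g_α(λ). Assume (b) r_α(λ) ≤ r_β(λ) for 0 < α ≤ β and λ ∈ [0,1/2], with 0 < r_α(λ) ≤ 1, and (c) there is c₂ > 0 with r_β(λ) - r_α(λ) ≤ c₂ √(λ/α) r_β(λ) for 0 < α ≤ β and λ ∈ [0,1/2]. Then for any bounded linear operator A: X → Y between Hilbert spaces with ‖A‖ ≤ 1/√2, any x, x̄ ∈ X and any 0 < α ≤ β: ‖[r_β(A*A) - r_α(A*A)] x‖ ≤ ‖x̄ - r_β(A*A) x‖ + (c₂/√α) ‖A x̄‖. -/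
local notation "⟪" x ", " y "⟫" => @inner ℂ _ _ x y


theorem stmt_10 {X Y : Type*}
    [NormedAddCommGroup X] [InnerProductSpace ℂ X] [CompleteSpace X]
    [NormedAddCommGroup Y] [InnerProductSpace ℂ Y] [CompleteSpace Y]
    (r : ℝ → ℝ → ℝ) (c₂ : ℝ) (hc₂ : 0 < c₂)
    (hcont : ∀ α : ℝ, 0 < α → ContinuousOn (r α) (Set.Icc (0:ℝ) (1/2)))
    (hpos : ∀ α l : ℝ, 0 < α → l ∈ Set.Icc (0:ℝ) (1/2) → 0 < r α l ∧ r α l ≤ 1)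
    (hmono : ∀ α β l : ℝ, 0 < α → α ≤ β → l ∈ Set.Icc (0:ℝ) (1/2) → r α l ≤ r β l)
    (hc : ∀ α β l : ℝ, 0 < α → α ≤ β → l ∈ Set.Icc (0:ℝ) (1/2) →
      r β l - r α l ≤ c₂ * Real.sqrt (l / α) * r β l)
    (A : X →L[ℂ] Y) (hA : ‖A‖ ≤ 1 / Real.sqrt 2)
    (x xbar : X) (α β : ℝ) (hα : 0 < α) (hαβ : α ≤ β) :
    ‖(cfc (r β) (A.adjoint ∘L A) - cfc (r α) (A.adjoint ∘L A)) x‖ ≤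
      ‖xbar - cfc (r β) (A.adjoint ∘L A) x‖ + c₂ / Real.sqrt α * ‖A xbar‖ := by
  rcases subsingleton_or_nontrivial X with hX | hX
  · rw [Subsingleton.elim ((cfc (r β) (A.adjoint ∘L A) - cfc (r α) (A.adjoint ∘L A)) x) 0,
      norm_zero]
    positivity
  have hβ : 0 < β := hα.trans_le hαβ
  set T := A.adjoint ∘L A with hTdef
  have hTpos : T.IsPositive := by
    simpa [ContinuousLinearMap.one_def] using (ContinuousLinearMap.isPositive_one (E := Y)).adjoint_conj A
  have hT : IsSelfAdjoint T := hTpos.isSelfAdjoint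
  have hTnonneg : (0 : X →L[ℂ] X) ≤ T := (ContinuousLinearMap.nonneg_iff_isPositive T).mpr hTpos
  have hs2 : Real.sqrt 2 > 0 := Real.sqrt_pos.mpr (by norm_num)
  have hs2sq : Real.sqrt 2 * Real.sqrt 2 = 2 := Real.mul_self_sqrt (by norm_num)
  have hnormT : ‖T‖ ≤ 1 / 2 := by
    rw [hTdef, ContinuousLinearMap.norm_adjoint_comp_self]
    have hAnn : (0:ℝ) ≤ ‖A‖ := norm_nonneg _
    have he : (1 / Real.sqrt 2) * (1 / Real.sqrt 2) = 1 / 2 := by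
      rw [div_mul_div_comm, one_mul, hs2sq]
    calc ‖A‖ * ‖A‖ ≤ (1 / Real.sqrt 2) * (1 / Real.sqrt 2) :=
          mul_le_mul hA hA hAnn (by positivity)
      _ = 1 / 2 := he
  have hspec : spectrum ℝ T ⊆ Set.Icc (0:ℝ) (1/2) := by
    intro l hl
    exact ⟨spectrum_nonneg_of_nonneg hTnonneg hl,
      (Real.le_norm_self l).trans ((spectrum.norm_le_norm_of_mem hl).trans hnormT)⟩
  set p : ℝ → ℝ := fun l => (r β l - r α l) / r β l with hpdef
  have hcβ : ContinuousOn (r β) (spectrum ℝ T) := (hcont β hβ).mono hspec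
  have hcα : ContinuousOn (r α) (spectrum ℝ T) := (hcont α hα).mono hspec
  have hcp : ContinuousOn p (spectrum ℝ T) :=
    (hcβ.sub hcα).div hcβ fun l hl => (hpos β l hβ (hspec hl)).1.ne'
  -- pointwise bounds on the spectrum
  have hp0 : ∀ l ∈ spectrum ℝ T, 0 ≤ p l := fun l hl =>
    div_nonneg (sub_nonneg.mpr (hmono α β l hα hαβ (hspec hl))) (hpos β l hβ (hspec hl)).1.le
  have hp1 : ∀ l ∈ spectrum ℝ T, p l ≤ 1 := fun l hl =>
    (div_le_one (hpos β l hβ (hspec hl)).1).mpr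
      (by linarith [(hpos α l hα (hspec hl)).1])
  have hpc : ∀ l ∈ spectrum ℝ T, p l ≤ c₂ * Real.sqrt (l / α) := fun l hl =>
    (div_le_iff₀ (hpos β l hβ (hspec hl)).1).mpr (hc α β l hα hαβ (hspec hl))
  have key : cfc (r β) T - cfc (r α) T = cfc p T * cfc (r β) T := by
    rw [← cfc_sub (r β) (r α) T hcβ hcα, ← cfc_mul p (r β) T hcp hcβ]
    exact cfc_congr fun l hl => by
      have := (hpos β l hβ (hspec hl)).1.ne'
      field_simp [hpdef]
      rw [hpdef]
      field_simp
  set S := cfc p T with hSdef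
  have hS : IsSelfAdjoint S := cfc_predicate p T
  have hSnorm : ‖S‖ ≤ 1 := norm_cfc_le zero_le_one fun l hl => by
    rw [Real.norm_of_nonneg (hp0 l hl)]; exact hp1 l hl
  have hsα : Real.sqrt α > 0 := Real.sqrt_pos.mpr hα
  have hsαsq : Real.sqrt α * Real.sqrt α = α := Real.mul_self_sqrt hα.le
  -- second bound : ‖S xbar‖ ≤ c₂ / √α * ‖A xbar‖
  have h2 : ‖S xbar‖ ≤ c₂ / Real.sqrt α * ‖A xbar‖ := by
    have hsq : cfc (fun l => p l * p l) T ≤ cfc (fun l => c₂ ^ 2 / α * l) T := by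
      refine cfc_mono (fun l hl => ?_) (hcp.mul hcp) (by fun_prop)
      have hl0 : 0 ≤ l := (hspec hl).1
      have hsql : Real.sqrt (l / α) * Real.sqrt (l / α) = l / α :=
        Real.mul_self_sqrt (by positivity)
      calc p l * p l ≤ (c₂ * Real.sqrt (l / α)) * (c₂ * Real.sqrt (l / α)) :=
            mul_le_mul (hpc l hl) (hpc l hl) (hp0 l hl) (by positivity)
        _ = c₂ ^ 2 * (Real.sqrt (l / α) * Real.sqrt (l / α)) := by ring
        _ = c₂ ^ 2 * (l / α) := by rw [hsql]
        _ = c₂ ^ 2 / α * l := by ring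
    rw [cfc_const_mul_id (c₂ ^ 2 / α) T hT] at hsq
    have hposdiff := (ContinuousLinearMap.le_def _ _).mp hsq
    have hinner := hposdiff.re_inner_nonneg_left xbar
    rw [ContinuousLinearMap.sub_apply, inner_sub_left, map_sub, sub_nonneg] at hinner
    have hmul : cfc (fun l => p l * p l) T = S * S := cfc_mul p p T hcp hcp
    have hSymm := (ContinuousLinearMap.isSelfAdjoint_iff_isSymmetric).mp hS
    have h1 : (inner ℂ (S (S xbar)) xbar : ℂ) = inner ℂ (S xbar) (S xbar) := hSymm (S xbar) xbar
    have hlhs : RCLike.re ⟪(cfc (fun l => p l * p l) T) xbar, xbar⟫ = ‖S xbar‖ ^ 2 := by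
      rw [hmul, ContinuousLinearMap.mul_apply, h1, inner_self_eq_norm_sq]
    have hrhs : RCLike.re ⟪((c₂ ^ 2 / α) • T) xbar, xbar⟫
        = c₂ ^ 2 / α * ‖A xbar‖ ^ 2 := by
      rw [ContinuousLinearMap.smul_apply]
      have hTin : ⟪T xbar, xbar⟫ = ⟪A xbar, A xbar⟫ := by
        rw [hTdef, ContinuousLinearMap.comp_apply, ContinuousLinearMap.adjoint_inner_left]
      have e1 : ⟪(c₂ ^ 2 / α) • T xbar, xbar⟫
          = ((c₂ ^ 2 / α : ℝ) : ℂ) * ⟪T xbar, xbar⟫ := by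
        rw [RCLike.real_smul_eq_coe_smul (K := ℂ), inner_smul_left, RCLike.conj_ofReal]
        rfl
      rw [e1, hTin, inner_self_eq_norm_sq_to_K (𝕜 := ℂ) (A xbar)]
      simp [← Complex.ofReal_mul, ← Complex.ofReal_pow, RCLike.re_to_complex]
    rw [hlhs, hrhs] at hinner
    have hSnn : (0:ℝ) ≤ ‖S xbar‖ := norm_nonneg _
    have hAnn : (0:ℝ) ≤ ‖A xbar‖ := norm_nonneg _
    have h3 : (‖S xbar‖ * Real.sqrt α) ^ 2 ≤ (c₂ * ‖A xbar‖) ^ 2 := by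
      have e2 : (‖S xbar‖ * Real.sqrt α) ^ 2 = ‖S xbar‖ ^ 2 * α := by
        rw [mul_pow, sq (Real.sqrt α), hsαsq]
      have e3 : (c₂ * ‖A xbar‖) ^ 2 = c₂ ^ 2 * ‖A xbar‖ ^ 2 := by ring
      rw [e2, e3]
      calc ‖S xbar‖ ^ 2 * α ≤ c₂ ^ 2 / α * ‖A xbar‖ ^ 2 * α :=
            mul_le_mul_of_nonneg_right hinner hα.le
        _ = c₂ ^ 2 * ‖A xbar‖ ^ 2 := by field_simp
    have h4 := Real.sqrt_le_sqrt h3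
    rw [Real.sqrt_sq (by positivity), Real.sqrt_sq (by positivity)] at h4
    rw [div_mul_eq_mul_div, le_div_iff₀ hsα]
    linarith
  -- main estimate
  rw [key, ContinuousLinearMap.mul_apply]
  calc ‖S (cfc (r β) T x)‖
      = ‖S (cfc (r β) T x - xbar) + S xbar‖ := by rw [← map_add, sub_add_cancel]
    _ ≤ ‖S (cfc (r β) T x - xbar)‖ + ‖S xbar‖ := norm_add_le _ _
    _ ≤ ‖xbar - cfc (r β) T x‖ + c₂ / Real.sqrt α * ‖A xbar‖ := by
        refine add_le_add ?_ h2
        calc ‖S (cfc (r β) T x - xbar)‖ ≤ ‖S‖ * ‖cfc (r β) T x - xbar‖ :=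
              ContinuousLinearMap.le_opNorm _ _
          _ ≤ 1 * ‖cfc (r β) T x - xbar‖ :=
              mul_le_mul_of_nonneg_right hSnorm (norm_nonneg _)
          _ = ‖xbar - cfc (r β) T x‖ := by rw [one_mul, norm_sub_rev]
end

section
/- Let μ > 0, c₀ > 0, α₀ > 0 and suppose r_α: [0,1/2] → [0,1] satisfies r_α(λ) ≤ 1 and r_α(λ)λ ≤ c₀α for all 0 < α ≤ α₀ and λ ∈ [0,1/2]. Then there exists a constant b_μ > 0 such that r_α(λ)·(-ln λ)^(-μ) ≤ b_μ·(-ln(α/(2α₀)))^(-μ) for all 0 < α ≤ α₀ and λ ∈ (0, 1/2]. -/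
open Real

lemma gmono (μ t s : ℝ) (hμ : 0 < μ) (hμt : μ ≤ t) (hts : t ≤ s) :
    s ^ μ * Real.exp (-s) ≤ t ^ μ * Real.exp (-t) := by
  have ht : 0 < t := hμ.trans_le hμt
  have hs : 0 < s := ht.trans_le hts
  rw [Real.rpow_def_of_pos hs, Real.rpow_def_of_pos ht, ← Real.exp_add, ← Real.exp_add,
    Real.exp_le_exp]
  have hlog : Real.log (s / t) ≤ s / t - 1 := Real.log_le_sub_one_of_pos (by positivity)
  have hlsub : Real.log (s / t) = Real.log s - Real.log t := Real.log_div hs.ne' ht.ne'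
  have hln0 : 0 ≤ Real.log (s / t) := Real.log_nonneg ((one_le_div ht).mpr hts)
  have hst : t * (s / t - 1) = s - t := by field_simp
  have h5 : t * Real.log (s / t) ≤ s - t := by
    have := mul_le_mul_of_nonneg_left hlog ht.le
    linarith
  have h6 : μ * Real.log (s / t) ≤ t * Real.log (s / t) := mul_le_mul_of_nonneg_right hμt hln0
  have h7 : μ * Real.log s - μ * Real.log t ≤ s - t := by nlinarith [h5, h6]
  linarith [h7]

lemma gmax (μ s : ℝ) (hμ : 0 < μ) (hs : 0 < s) :
    s ^ μ * Real.exp (-s) ≤ μ ^ μ * Real.exp (-μ) := by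
  rw [Real.rpow_def_of_pos hs, Real.rpow_def_of_pos hμ, ← Real.exp_add, ← Real.exp_add,
    Real.exp_le_exp]
  have hlog : Real.log (s / μ) ≤ s / μ - 1 := Real.log_le_sub_one_of_pos (by positivity)
  rw [Real.log_div hs.ne' hμ.ne'] at hlog
  have hst : μ * (s / μ - 1) = s - μ := by field_simp
  have h2 := mul_le_mul_of_nonneg_left hlog hμ.le
  nlinarith [h2]

lemma key (μ t s : ℝ) (hμ : 0 < μ) (ht : Real.log 2 ≤ t) (hts : t ≤ s) :
    Real.exp (t - s) * t ^ (-μ) ≤ max 1 ((μ / Real.log 2) ^ μ) * s ^ (-μ) := by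
  have hl2 : 0 < Real.log 2 := Real.log_pos (by norm_num)
  have ht' : 0 < t := hl2.trans_le ht
  have hs : 0 < s := ht'.trans_le hts
  set C : ℝ := max 1 ((μ / Real.log 2) ^ μ) with hC
  have hC0 : 0 < C := lt_of_lt_of_le one_pos (le_max_left _ _)
  have main : s ^ μ * Real.exp (-s) ≤ C * (t ^ μ * Real.exp (-t)) := by
    rcases le_or_gt μ t with h | h
    · calc s ^ μ * Real.exp (-s) ≤ t ^ μ * Real.exp (-t) := gmono μ t s hμ h hts
        _ ≤ C * (t ^ μ * Real.exp (-t)) := le_mul_of_one_le_left (by positivity) (le_max_left _ _)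
    · have h1 : s ^ μ * Real.exp (-s) ≤ μ ^ μ * Real.exp (-μ) := gmax μ s hμ hs
      have heq : μ ^ μ * Real.exp (-μ) = (μ / Real.log 2) ^ μ * ((Real.log 2) ^ μ * Real.exp (-μ)) := by
        rw [Real.div_rpow hμ.le hl2.le]
        have : (Real.log 2 : ℝ) ^ μ ≠ 0 := (Real.rpow_pos_of_pos hl2 μ).ne'
        field_simp
      have h2 : (Real.log 2) ^ μ * Real.exp (-μ) ≤ t ^ μ * Real.exp (-t) := by
        apply mul_le_mul (Real.rpow_le_rpow hl2.le ht hμ.le)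
          (Real.exp_le_exp.mpr (by linarith)) (Real.exp_pos _).le (by positivity)
      calc s ^ μ * Real.exp (-s) ≤ μ ^ μ * Real.exp (-μ) := h1
        _ = (μ / Real.log 2) ^ μ * ((Real.log 2) ^ μ * Real.exp (-μ)) := heq
        _ ≤ (μ / Real.log 2) ^ μ * (t ^ μ * Real.exp (-t)) := by
            apply mul_le_mul_of_nonneg_left h2 (by positivity)
        _ ≤ C * (t ^ μ * Real.exp (-t)) := by
            apply mul_le_mul_of_nonneg_right (le_max_right _ _) (by positivity)
  -- convert
  rw [Real.rpow_neg ht'.le, Real.rpow_neg hs.le]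
  have htp : (0:ℝ) < t ^ μ := Real.rpow_pos_of_pos ht' μ
  have hsp : (0:ℝ) < s ^ μ := Real.rpow_pos_of_pos hs μ
  rw [← mul_le_mul_iff_of_pos_right (show (0:ℝ) < t ^ μ * s ^ μ by positivity)]
  calc Real.exp (t - s) * (t ^ μ)⁻¹ * (t ^ μ * s ^ μ)
      = Real.exp t * (s ^ μ * Real.exp (-s)) := by
        rw [Real.exp_sub, Real.exp_neg]
        field_simp
    _ ≤ Real.exp t * (C * (t ^ μ * Real.exp (-t))) :=
        mul_le_mul_of_nonneg_left main (Real.exp_pos t).le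
    _ = C * (s ^ μ)⁻¹ * (t ^ μ * s ^ μ) := by
        rw [Real.exp_neg]
        field_simp

theorem stmt_12 (μ c₀ α₀ : ℝ) (hμ : 0 < μ) (hc₀ : 0 < c₀) (hα₀ : 0 < α₀)
    (r : ℝ → ℝ → ℝ)
    (hr01 : ∀ α l : ℝ, 0 < α → α ≤ α₀ → l ∈ Set.Icc (0:ℝ) (1/2) →
      0 ≤ r α l ∧ r α l ≤ 1)
    (hrl : ∀ α l : ℝ, 0 < α → α ≤ α₀ → l ∈ Set.Icc (0:ℝ) (1/2) → r α l * l ≤ c₀ * α) :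
    ∃ b : ℝ, 0 < b ∧ ∀ α l : ℝ, 0 < α → α ≤ α₀ → l ∈ Set.Ioc (0:ℝ) (1/2) →
      r α l * (-Real.log l) ^ (-μ) ≤ b * (-Real.log (α / (2 * α₀))) ^ (-μ) := by
  have hl2 : 0 < Real.log 2 := Real.log_pos (by norm_num)
  set C : ℝ := max 1 ((μ / Real.log 2) ^ μ) with hC
  have hC1 : (1:ℝ) ≤ C := le_max_left _ _
  refine ⟨max 1 (2 * c₀ * α₀ * C), lt_of_lt_of_le one_pos (le_max_left _ _), ?_⟩
  intro α l hα hαα₀ hl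
  obtain ⟨hl0, hl12⟩ := hl
  have hlIcc : l ∈ Set.Icc (0:ℝ) (1/2) := ⟨hl0.le, hl12⟩
  obtain ⟨hr0, hr1⟩ := hr01 α l hα hαα₀ hlIcc
  set β : ℝ := α / (2 * α₀) with hβ
  have hβ0 : 0 < β := by positivity
  have hβ12 : β ≤ 1 / 2 := by
    rw [hβ, div_le_div_iff₀ (by positivity) (by norm_num)]
    linarith
  set s : ℝ := -Real.log β with hs
  set t : ℝ := -Real.log l with ht
  have hsl2 : Real.log 2 ≤ s := by
    rw [hs, le_neg]
    calc Real.log β ≤ Real.log (1/2) := Real.log_le_log hβ0 hβ12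
      _ = -Real.log 2 := by rw [Real.log_div one_ne_zero (by norm_num), Real.log_one]; ring
  have htl2 : Real.log 2 ≤ t := by
    rw [ht, le_neg]
    calc Real.log l ≤ Real.log (1/2) := Real.log_le_log hl0 hl12
      _ = -Real.log 2 := by rw [Real.log_div one_ne_zero (by norm_num), Real.log_one]; ring
  have hs0 : 0 < s := hl2.trans_le hsl2
  have ht0 : 0 < t := hl2.trans_le htl2
  have hspow : (0:ℝ) < s ^ (-μ) := Real.rpow_pos_of_pos hs0 _
  rcases le_or_gt l β with hcase | hcase
  · -- l ≤ β : use r ≤ 1 and monotonicity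
    have hst : s ≤ t := by
      rw [hs, ht, neg_le_neg_iff]
      exact Real.log_le_log hl0 hcase
    have hmono : t ^ (-μ) ≤ s ^ (-μ) := by
      apply Real.rpow_le_rpow_of_nonpos hs0 hst (by linarith)
    calc r α l * t ^ (-μ) ≤ 1 * t ^ (-μ) := by
          apply mul_le_mul_of_nonneg_right hr1 (Real.rpow_pos_of_pos ht0 _).le
      _ = t ^ (-μ) := one_mul _
      _ ≤ s ^ (-μ) := hmono
      _ = 1 * s ^ (-μ) := (one_mul _).symm
      _ ≤ max 1 (2 * c₀ * α₀ * C) * s ^ (-μ) := by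
          apply mul_le_mul_of_nonneg_right (le_max_left _ _) hspow.le
  · -- β < l
    have hts : t ≤ s := by
      rw [hs, ht, neg_le_neg_iff]
      exact Real.log_le_log hβ0 hcase.le
    have hrle : r α l ≤ c₀ * α / l := by
      rw [le_div_iff₀ hl0]
      exact hrl α l hα hαα₀ hlIcc
    have hβexp : β = Real.exp (-s) := by rw [hs, neg_neg, Real.exp_log hβ0]
    have hlexp : l = Real.exp (-t) := by rw [ht, neg_neg, Real.exp_log hl0]
    have hαβ : c₀ * α = 2 * c₀ * α₀ * β := by rw [hβ]; field_simp
    have hfrac : c₀ * α / l = 2 * c₀ * α₀ * Real.exp (t - s) := by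
      rw [hαβ, hβexp, hlexp, mul_div_assoc, ← Real.exp_sub]
      ring_nf
    have hkey := key μ t s hμ htl2 hts
    calc r α l * t ^ (-μ) ≤ (c₀ * α / l) * t ^ (-μ) := by
          apply mul_le_mul_of_nonneg_right hrle (Real.rpow_pos_of_pos ht0 _).le
      _ = 2 * c₀ * α₀ * (Real.exp (t - s) * t ^ (-μ)) := by rw [hfrac]; ring
      _ ≤ 2 * c₀ * α₀ * (C * s ^ (-μ)) := by
          apply mul_le_mul_of_nonneg_left hkey (by positivity)
      _ = 2 * c₀ * α₀ * C * s ^ (-μ) := by ring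
      _ ≤ max 1 (2 * c₀ * α₀ * C) * s ^ (-μ) := by
          apply mul_le_mul_of_nonneg_right (le_max_right _ _) hspow.le
end

section
/- Let A, B be bounded linear operators between Hilbert spaces with ‖A‖, ‖B‖ ≤ 1/√2, let m ≥ 1 be an integer, and r_α(λ) = α^m/(α+λ)^m. Then there exists a constant c (depending only on m) such that ‖A[r_α(A*A) - r_α(B*B)]B*‖ ≤ c·α^(1/2)·‖A - B‖ for all α > 0. -/
section Aux

open ContinuousLinearMap

variable {X Y : Type*} [NormedAddCommGroup X] [InnerProductSpace ℂ X] [CompleteSpace X]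
  [NormedAddCommGroup Y] [InnerProductSpace ℂ Y] [CompleteSpace Y]

noncomputable def opT (A : X →L[ℂ] Y) (α : ℝ) : X →L[ℂ] X :=
  α • (1 : X →L[ℂ] X) + A.adjoint ∘L A

lemma quad_id (A : X →L[ℂ] Y) (α : ℝ) (x : X) :
    RCLike.re (inner (𝕜 := ℂ) x (opT A α x)) = α * ‖x‖ ^ 2 + ‖A x‖ ^ 2 := by
  have h : opT A α x = α • x + A.adjoint (A x) := by
    rw [opT, ContinuousLinearMap.add_apply, ContinuousLinearMap.smul_apply,
      ContinuousLinearMap.one_apply]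
    rfl
  rw [h, inner_add_right, ContinuousLinearMap.adjoint_inner_right,
    RCLike.real_smul_eq_coe_smul (K := ℂ), inner_smul_right, map_add]
  simp [RCLike.mul_re, inner_self_eq_norm_sq, ← Complex.ofReal_pow, Complex.ofReal_re]

lemma opT_lower (A : X →L[ℂ] Y) {α : ℝ} (hα : 0 < α) (x : X) :
    α * ‖x‖ ≤ ‖opT A α x‖ := by
  rcases eq_or_ne x 0 with rfl | hx
  · simp
  · have hx' : 0 < ‖x‖ := norm_pos_iff.mpr hx
    have h1 : α * ‖x‖ ^ 2 ≤ RCLike.re (inner (𝕜 := ℂ) x (opT A α x)) := by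
      rw [quad_id]; nlinarith [sq_nonneg ‖A x‖]
    have h2 : RCLike.re (inner (𝕜 := ℂ) x (opT A α x)) ≤ ‖x‖ * ‖opT A α x‖ :=
      re_inner_le_norm _ _
    have h3 : α * ‖x‖ * ‖x‖ ≤ ‖opT A α x‖ * ‖x‖ := by nlinarith
    exact le_of_mul_le_mul_right (by linarith) hx'

lemma isUnit_opT (A : X →L[ℂ] Y) {α : ℝ} (hα : 0 < α) : IsUnit (opT A α) := by
  set T := opT A α with hT
  have hanti : AntilipschitzWith (⟨α⁻¹, by positivity⟩ : NNReal) T := by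
    apply ContinuousLinearMap.antilipschitz_of_bound
    intro x
    change ‖x‖ ≤ α⁻¹ * ‖T x‖
    calc ‖x‖ = α⁻¹ * (α * ‖x‖) := by field_simp
      _ ≤ α⁻¹ * ‖T x‖ := by
          have := opT_lower A hα x
          gcongr
  have hker : T.ker = ⊥ := by
    rw [Submodule.eq_bot_iff]
    intro x hx
    have hx0 : T x = 0 := LinearMap.mem_ker.mp hx
    have h3 := opT_lower A hα x
    rw [hx0, norm_zero] at h3
    have h4 : α * ‖x‖ ≤ α * 0 := by rw [mul_zero]; exact h3
    have h5 : ‖x‖ ≤ 0 := le_of_mul_le_mul_left h4 hα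
    exact norm_eq_zero.mp (le_antisymm h5 (norm_nonneg x))
  have hclosed : IsClosed (T.range : Set X) :=
    hanti.isClosed_range T.uniformContinuous
  have hrange : T.range = ⊤ := by
    set K : Submodule ℂ X := T.range with hK
    have : CompleteSpace K := hclosed.completeSpace_coe
    have horth : Kᗮ = ⊥ := by
      rw [Submodule.eq_bot_iff]
      intro y hy
      have h0 : (inner (𝕜 := ℂ) (T y) y) = 0 := hy (T y) ⟨y, rfl⟩
      have h1 : RCLike.re (inner (𝕜 := ℂ) y (T y)) = 0 := by
        rw [← inner_conj_symm, h0]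
        simp
      rw [quad_id] at h1
      have h2 : ‖y‖ ^ 2 ≤ 0 := by nlinarith [sq_nonneg ‖A y‖]
      have h3 : ‖y‖ ^ 2 = 0 := le_antisymm h2 (sq_nonneg _)
      exact norm_eq_zero.mp (pow_eq_zero_iff two_ne_zero |>.mp h3)
    have := Submodule.orthogonal_orthogonal K
    rw [horth, Submodule.bot_orthogonal_eq_top] at this
    exact this.symm
  let e := ContinuousLinearEquiv.ofBijective T hker hrange
  refine ⟨⟨T, (e.symm : X →L[ℂ] X), ?_, ?_⟩, rfl⟩
  · ext x
    exact e.apply_symm_apply x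
  · ext x
    exact e.symm_apply_apply x


variable {A : X →L[ℂ] Y} {α : ℝ}

lemma opT_inv_cancel (hα : 0 < α) (x : X) :
    opT A α (Ring.inverse (opT A α) x) = x := by
  have h := Ring.mul_inverse_cancel _ (isUnit_opT A hα)
  calc opT A α (Ring.inverse (opT A α) x) = (opT A α * Ring.inverse (opT A α)) x := rfl
    _ = x := by rw [h]; rfl

lemma key_id (hα : 0 < α) (x : X) :
    α * ‖Ring.inverse (opT A α) x‖ ^ 2 + ‖A (Ring.inverse (opT A α) x)‖ ^ 2
      = RCLike.re (inner (𝕜 := ℂ) (Ring.inverse (opT A α) x) x) := by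
  have h := quad_id A α (Ring.inverse (opT A α) x)
  rw [opT_inv_cancel hα x] at h
  exact h.symm

lemma est1 (hα : 0 < α) (x : X) : ‖Ring.inverse (opT A α) x‖ ≤ α⁻¹ * ‖x‖ := by
  set u := Ring.inverse (opT A α) x with hu
  have h := key_id (A := A) hα x
  have h2 : RCLike.re (inner (𝕜 := ℂ) u x) ≤ ‖u‖ * ‖x‖ := re_inner_le_norm _ _
  rcases eq_or_ne u 0 with h0 | h0
  · rw [h0, norm_zero]; positivity
  · have hu' : 0 < ‖u‖ := norm_pos_iff.mpr h0
    have h3 : α * ‖u‖ * ‖u‖ ≤ ‖x‖ * ‖u‖ := by nlinarith [sq_nonneg ‖A u‖]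
    have h4 : α * ‖u‖ ≤ ‖x‖ := le_of_mul_le_mul_right h3 hu'
    calc ‖u‖ = α⁻¹ * (α * ‖u‖) := by field_simp
      _ ≤ α⁻¹ * ‖x‖ := by gcongr

lemma sq_le_imp {a b : ℝ} (ha : 0 ≤ a) (hb : 0 ≤ b) (h : a ^ 2 ≤ b ^ 2) : a ≤ b := by
  nlinarith

lemma est2 (hα : 0 < α) (x : X) :
    ‖A (Ring.inverse (opT A α) x)‖ ≤ (Real.sqrt α)⁻¹ * ‖x‖ := by
  set u := Ring.inverse (opT A α) x with hu
  have h := key_id (A := A) hα x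
  have h2 : RCLike.re (inner (𝕜 := ℂ) u x) ≤ ‖u‖ * ‖x‖ := re_inner_le_norm _ _
  have h3 : ‖u‖ ≤ α⁻¹ * ‖x‖ := est1 hα x
  have hs : Real.sqrt α * Real.sqrt α = α := Real.mul_self_sqrt hα.le
  have hs0 : 0 < Real.sqrt α := Real.sqrt_pos.mpr hα
  apply sq_le_imp (norm_nonneg _) (by positivity)
  have : ‖A u‖ ^ 2 ≤ α⁻¹ * ‖x‖ ^ 2 := by nlinarith [norm_nonneg u, norm_nonneg x, sq_nonneg ‖u‖]
  calc ‖A u‖ ^ 2 ≤ α⁻¹ * ‖x‖ ^ 2 := this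
    _ = ((Real.sqrt α)⁻¹ * ‖x‖) ^ 2 := by
        rw [mul_pow, ← hs]; field_simp
        rw [Real.sqrt_sq hs0.le, mul_comm]

lemma est34 (hα : 0 < α) (y : Y) :
    ‖A (Ring.inverse (opT A α) (A.adjoint y))‖ ≤ ‖y‖ ∧
      ‖Ring.inverse (opT A α) (A.adjoint y)‖ ≤ (Real.sqrt α)⁻¹ * ‖y‖ := by
  set u := Ring.inverse (opT A α) (A.adjoint y) with hu
  have h := key_id (A := A) hα (A.adjoint y)
  have hre : RCLike.re (inner (𝕜 := ℂ) u (A.adjoint y)) ≤ ‖A u‖ * ‖y‖ := by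
    rw [ContinuousLinearMap.adjoint_inner_right]
    exact re_inner_le_norm _ _
  have hAu : ‖A u‖ ≤ ‖y‖ := by
    rcases eq_or_ne (A u) 0 with h0 | h0
    · rw [h0, norm_zero]; positivity
    · have h1 : 0 < ‖A u‖ := norm_pos_iff.mpr h0
      have h2 : ‖A u‖ * ‖A u‖ ≤ ‖y‖ * ‖A u‖ := by nlinarith [sq_nonneg ‖u‖]
      exact le_of_mul_le_mul_right h2 h1
  refine ⟨hAu, ?_⟩
  have hs : Real.sqrt α * Real.sqrt α = α := Real.mul_self_sqrt hα.le
  have hs0 : 0 < Real.sqrt α := Real.sqrt_pos.mpr hα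
  apply sq_le_imp (norm_nonneg _) (by positivity)
  have h4 : α * ‖u‖ ^ 2 ≤ ‖y‖ ^ 2 := by nlinarith [norm_nonneg (A u), norm_nonneg y]
  calc ‖u‖ ^ 2 = α⁻¹ * (α * ‖u‖ ^ 2) := by field_simp
    _ ≤ α⁻¹ * ‖y‖ ^ 2 := by gcongr
    _ = ((Real.sqrt α)⁻¹ * ‖y‖) ^ 2 := by rw [mul_pow, ← hs]; field_simp
                                          rw [Real.sqrt_sq hs0.le, mul_comm]


lemma pow_apply_succ' (hα : 0 < α) (n : ℕ) (x : X) :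
    (Ring.inverse (opT A α) ^ (n + 1)) x
      = Ring.inverse (opT A α) ((Ring.inverse (opT A α) ^ n) x) := by
  rw [pow_succ']; rfl

lemma pow_apply_succ (hα : 0 < α) (n : ℕ) (x : X) :
    (Ring.inverse (opT A α) ^ (n + 1)) x
      = (Ring.inverse (opT A α) ^ n) (Ring.inverse (opT A α) x) := by
  rw [pow_succ]; rfl

lemma pow1 (hα : 0 < α) (n : ℕ) (x : X) :
    ‖(Ring.inverse (opT A α) ^ n) x‖ ≤ α⁻¹ ^ n * ‖x‖ := by
  induction n with
  | zero => simp
  | succ n ih =>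
    rw [pow_apply_succ' hα]
    calc ‖Ring.inverse (opT A α) ((Ring.inverse (opT A α) ^ n) x)‖
        ≤ α⁻¹ * ‖(Ring.inverse (opT A α) ^ n) x‖ := est1 hα _
      _ ≤ α⁻¹ * (α⁻¹ ^ n * ‖x‖) := by
          have h0 : (0:ℝ) ≤ α⁻¹ := by positivity
          exact mul_le_mul_of_nonneg_left ih h0
      _ = α⁻¹ ^ (n + 1) * ‖x‖ := by ring

lemma pow2 (hα : 0 < α) (n : ℕ) (x : X) :
    ‖A ((Ring.inverse (opT A α) ^ (n + 1)) x)‖ ≤ (Real.sqrt α)⁻¹ * α⁻¹ ^ n * ‖x‖ := by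
  rw [pow_apply_succ' hα]
  calc ‖A (Ring.inverse (opT A α) ((Ring.inverse (opT A α) ^ n) x))‖
      ≤ (Real.sqrt α)⁻¹ * ‖(Ring.inverse (opT A α) ^ n) x‖ := est2 hα _
    _ ≤ (Real.sqrt α)⁻¹ * (α⁻¹ ^ n * ‖x‖) := by
        have h0 : (0:ℝ) ≤ (Real.sqrt α)⁻¹ := by positivity
        exact mul_le_mul_of_nonneg_left (pow1 hα n x) h0
    _ = (Real.sqrt α)⁻¹ * α⁻¹ ^ n * ‖x‖ := by ring

lemma pow4 (hα : 0 < α) (n : ℕ) (y : Y) :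
    ‖(Ring.inverse (opT A α) ^ (n + 1)) (A.adjoint y)‖
      ≤ (Real.sqrt α)⁻¹ * α⁻¹ ^ n * ‖y‖ := by
  rw [pow_apply_succ hα]
  calc ‖(Ring.inverse (opT A α) ^ n) (Ring.inverse (opT A α) (A.adjoint y))‖
      ≤ α⁻¹ ^ n * ‖Ring.inverse (opT A α) (A.adjoint y)‖ := pow1 hα n _
    _ ≤ α⁻¹ ^ n * ((Real.sqrt α)⁻¹ * ‖y‖) := by
        have h0 : (0:ℝ) ≤ α⁻¹ ^ n := by positivity
        exact mul_le_mul_of_nonneg_left (est34 hα y).2 h0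
    _ = (Real.sqrt α)⁻¹ * α⁻¹ ^ n * ‖y‖ := by ring

lemma pow3 (hα : 0 < α) (n : ℕ) (y : Y) :
    ‖A ((Ring.inverse (opT A α) ^ (n + 1)) (A.adjoint y))‖ ≤ α⁻¹ ^ n * ‖y‖ := by
  have hs : Real.sqrt α * Real.sqrt α = α := Real.mul_self_sqrt hα.le
  have hs0 : 0 < Real.sqrt α := Real.sqrt_pos.mpr hα
  cases n with
  | zero => simpa using (est34 hα y).1
  | succ n =>
    rw [pow_apply_succ' hα]
    calc ‖A (Ring.inverse (opT A α) ((Ring.inverse (opT A α) ^ (n + 1)) (A.adjoint y)))‖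
        ≤ (Real.sqrt α)⁻¹ * ‖(Ring.inverse (opT A α) ^ (n + 1)) (A.adjoint y)‖ := est2 hα _
      _ ≤ (Real.sqrt α)⁻¹ * ((Real.sqrt α)⁻¹ * α⁻¹ ^ n * ‖y‖) := by
          have h0 : (0:ℝ) ≤ (Real.sqrt α)⁻¹ := by positivity
          exact mul_le_mul_of_nonneg_left (pow4 hα n y) h0
      _ = α⁻¹ ^ (n + 1) * ‖y‖ := by
          rw [pow_succ]
          have hinv : (Real.sqrt α)⁻¹ * (Real.sqrt α)⁻¹ = α⁻¹ := by rw [← mul_inv, hs]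
          calc (Real.sqrt α)⁻¹ * ((Real.sqrt α)⁻¹ * α⁻¹ ^ n * ‖y‖)
              = (Real.sqrt α)⁻¹ * (Real.sqrt α)⁻¹ * (α⁻¹ ^ n * ‖y‖) := by ring
            _ = α⁻¹ * (α⁻¹ ^ n * ‖y‖) := by rw [hinv]
            _ = α⁻¹ ^ n * α⁻¹ * ‖y‖ := by ring

end Aux

lemma tele {M : Type*} [Ring M] (T S R V : M) (hRT : R * T = 1) (hSV : S * V = 1) (m : ℕ) :
    R ^ m - V ^ m = ∑ k ∈ Finset.range m, R ^ (k + 1) * (S - T) * V ^ (m - k) := by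
  have key : ∀ k ∈ Finset.range m, R ^ (k + 1) * (S - T) * V ^ (m - k)
      = R ^ (k + 1) * V ^ (m - (k + 1)) - R ^ k * V ^ (m - k) := by
    intro k hk
    have hk' : k < m := Finset.mem_range.mp hk
    obtain ⟨j, hj⟩ : ∃ j, m - k = j + 1 := ⟨m - k - 1, by omega⟩
    have hj2 : m - (k + 1) = j := by omega
    rw [hj, hj2]
    have h1 : S * V ^ (j + 1) = V ^ j := by
      rw [pow_succ', ← mul_assoc, hSV, one_mul]
    have h2 : R ^ (k + 1) * T = R ^ k := by
      rw [pow_succ, mul_assoc, hRT, mul_one]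
    calc R ^ (k + 1) * (S - T) * V ^ (j + 1)
        = R ^ (k + 1) * (S * V ^ (j + 1)) - R ^ (k + 1) * T * V ^ (j + 1) := by
          rw [mul_sub, sub_mul, mul_assoc]
      _ = R ^ (k + 1) * V ^ j - R ^ k * V ^ (j + 1) := by rw [h1, h2]
  rw [Finset.sum_congr rfl key,
    Finset.sum_range_sub (f := fun k => R ^ k * V ^ (m - k)) m]
  simp

set_option maxHeartbeats 2000000 in
theorem stmt_15 (m : ℕ) (hm : 1 ≤ m) :
    ∃ c : ℝ, 0 < c ∧
      ∀ (X Y : Type*) [NormedAddCommGroup X] [InnerProductSpace ℂ X] [CompleteSpace X]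
        [NormedAddCommGroup Y] [InnerProductSpace ℂ Y] [CompleteSpace Y]
        (A B : X →L[ℂ] Y), ‖A‖ ≤ 1 / Real.sqrt 2 → ‖B‖ ≤ 1 / Real.sqrt 2 →
        ∀ α : ℝ, 0 < α →
          ‖A ∘L (α ^ m • Ring.inverse (α • (1 : X →L[ℂ] X) + A.adjoint ∘L A) ^ m -
              α ^ m • Ring.inverse (α • (1 : X →L[ℂ] X) + B.adjoint ∘L B) ^ m) ∘L
              B.adjoint‖ ≤ c * α ^ ((1:ℝ)/2) * ‖A - B‖ := by
  have hmpos : (0:ℝ) < 2 * m := by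
    have : (1:ℝ) ≤ m := by exact_mod_cast hm
    linarith
  refine ⟨2 * m, hmpos, ?_⟩
  intro X Y _ _ _ _ _ _ A B hA hB α hα
  obtain ⟨n, rfl⟩ : ∃ n, m = n + 1 := ⟨m - 1, by omega⟩
  rw [show (α • (1 : X →L[ℂ] X) + A.adjoint ∘L A) = opT A α from rfl,
    show (α • (1 : X →L[ℂ] X) + B.adjoint ∘L B) = opT B α from rfl]
  set R := Ring.inverse (opT A α) with hR
  set V := Ring.inverse (opT B α) with hV
  have hRT : R * opT A α = 1 := Ring.inverse_mul_cancel _ (isUnit_opT A hα)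
  have hSV : opT B α * V = 1 := Ring.mul_inverse_cancel _ (isUnit_opT B hα)
  have htele := tele (opT A α) (opT B α) R V hRT hSV (n + 1)
  have hs : Real.sqrt α * Real.sqrt α = α := Real.mul_self_sqrt hα.le
  have hs0 : 0 < Real.sqrt α := Real.sqrt_pos.mpr hα
  rw [← Real.sqrt_eq_rpow]
  apply ContinuousLinearMap.opNorm_le_bound _ (by positivity)
  intro y
  -- pointwise computation
  have e1 : (A ∘L (α ^ (n+1) • R ^ (n+1) - α ^ (n+1) • V ^ (n+1)) ∘L B.adjoint) y
      = α ^ (n+1) • A ((R ^ (n+1) - V ^ (n+1)) (B.adjoint y)) := by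
    simp only [ContinuousLinearMap.comp_apply, ContinuousLinearMap.sub_apply,
      ContinuousLinearMap.smul_apply, smul_sub]
    rw [← smul_sub, A.map_smul_of_tower]
  rw [e1, norm_smul, Real.norm_eq_abs, abs_of_pos (pow_pos hα _)]
  have e2 : (R ^ (n+1) - V ^ (n+1)) (B.adjoint y)
      = ∑ k ∈ Finset.range (n+1),
          (R ^ (k+1) * (opT B α - opT A α) * V ^ (n+1-k)) (B.adjoint y) := by
    rw [htele, ContinuousLinearMap.sum_apply]
  rw [e2, map_sum]
  have hterm : ∀ k ∈ Finset.range (n+1),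
      ‖A ((R ^ (k+1) * (opT B α - opT A α) * V ^ (n+1-k)) (B.adjoint y))‖
        ≤ 2 * ((Real.sqrt α)⁻¹ * α⁻¹ ^ n * (‖B - A‖ * ‖y‖)) := by
    intro k hk
    have hk' : k < n + 1 := Finset.mem_range.mp hk
    have hj1 : n + 1 - k = (n - k) + 1 := by omega
    have hj2 : k + (n - k) = n := by omega
    set w : X := (V ^ (n+1-k)) (B.adjoint y) with hw
    have happ : (R ^ (k+1) * (opT B α - opT A α) * V ^ (n+1-k)) (B.adjoint y)
        = (R ^ (k+1)) ((opT B α - opT A α) w) := rfl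
    have hD : (opT B α - opT A α) w
        = (B - A).adjoint (B w) + A.adjoint ((B - A) w) := by
      have hadj : (B - A).adjoint = B.adjoint - A.adjoint :=
        map_sub ContinuousLinearMap.adjoint B A
      simp only [opT, ContinuousLinearMap.sub_apply, ContinuousLinearMap.add_apply,
        ContinuousLinearMap.comp_apply, hadj, map_sub]
      abel
    rw [happ, hD, map_add, map_add, hR]
    have hBw : ‖B w‖ ≤ α⁻¹ ^ (n - k) * ‖y‖ := by
      rw [hw, hj1]
      exact pow3 (A := B) hα (n - k) y
    have hww : ‖w‖ ≤ (Real.sqrt α)⁻¹ * α⁻¹ ^ (n - k) * ‖y‖ := by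
      rw [hw, hj1]
      exact pow4 (A := B) hα (n - k) y
    have hadjnorm : ‖(B - A).adjoint‖ = ‖B - A‖ :=
      ContinuousLinearMap.adjoint.norm_map (B - A)
    have b1 : ‖A ((Ring.inverse (opT A α) ^ (k+1)) ((B - A).adjoint (B w)))‖
        ≤ (Real.sqrt α)⁻¹ * α⁻¹ ^ n * (‖B - A‖ * ‖y‖) := by
      calc ‖A ((Ring.inverse (opT A α) ^ (k+1)) ((B - A).adjoint (B w)))‖
          ≤ (Real.sqrt α)⁻¹ * α⁻¹ ^ k * ‖(B - A).adjoint (B w)‖ := pow2 hα k _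
        _ ≤ (Real.sqrt α)⁻¹ * α⁻¹ ^ k * (‖B - A‖ * ‖B w‖) := by
            have := ((B - A).adjoint).le_opNorm (B w)
            rw [hadjnorm] at this
            have h0 : (0:ℝ) ≤ (Real.sqrt α)⁻¹ * α⁻¹ ^ k := by positivity
            exact mul_le_mul_of_nonneg_left this h0
        _ ≤ (Real.sqrt α)⁻¹ * α⁻¹ ^ k * (‖B - A‖ * (α⁻¹ ^ (n - k) * ‖y‖)) := by
            have h0 : (0:ℝ) ≤ (Real.sqrt α)⁻¹ * α⁻¹ ^ k := by positivity
            have h1 : ‖B - A‖ * ‖B w‖ ≤ ‖B - A‖ * (α⁻¹ ^ (n - k) * ‖y‖) :=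
              mul_le_mul_of_nonneg_left hBw (norm_nonneg _)
            exact mul_le_mul_of_nonneg_left h1 h0
        _ = (Real.sqrt α)⁻¹ * (α⁻¹ ^ k * α⁻¹ ^ (n - k)) * (‖B - A‖ * ‖y‖) := by ring
        _ = (Real.sqrt α)⁻¹ * α⁻¹ ^ n * (‖B - A‖ * ‖y‖) := by
            rw [← pow_add, hj2]
    have b2 : ‖A ((Ring.inverse (opT A α) ^ (k+1)) (A.adjoint ((B - A) w)))‖
        ≤ (Real.sqrt α)⁻¹ * α⁻¹ ^ n * (‖B - A‖ * ‖y‖) := by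
      calc ‖A ((Ring.inverse (opT A α) ^ (k+1)) (A.adjoint ((B - A) w)))‖
          ≤ α⁻¹ ^ k * ‖(B - A) w‖ := pow3 hα k _
        _ ≤ α⁻¹ ^ k * (‖B - A‖ * ((Real.sqrt α)⁻¹ * α⁻¹ ^ (n - k) * ‖y‖)) := by
            have h0 : (0:ℝ) ≤ α⁻¹ ^ k := by positivity
            have h1 : ‖(B - A) w‖ ≤ ‖B - A‖ * ((Real.sqrt α)⁻¹ * α⁻¹ ^ (n - k) * ‖y‖) := by
              calc ‖(B - A) w‖ ≤ ‖B - A‖ * ‖w‖ := (B - A).le_opNorm w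
                _ ≤ ‖B - A‖ * ((Real.sqrt α)⁻¹ * α⁻¹ ^ (n - k) * ‖y‖) :=
                    mul_le_mul_of_nonneg_left hww (norm_nonneg _)
            exact mul_le_mul_of_nonneg_left h1 h0
        _ = (Real.sqrt α)⁻¹ * (α⁻¹ ^ k * α⁻¹ ^ (n - k)) * (‖B - A‖ * ‖y‖) := by ring
        _ = (Real.sqrt α)⁻¹ * α⁻¹ ^ n * (‖B - A‖ * ‖y‖) := by
            rw [← pow_add, hj2]
    calc ‖A ((Ring.inverse (opT A α) ^ (k+1)) ((B - A).adjoint (B w)))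
            + A ((Ring.inverse (opT A α) ^ (k+1)) (A.adjoint ((B - A) w)))‖
        ≤ ‖A ((Ring.inverse (opT A α) ^ (k+1)) ((B - A).adjoint (B w)))‖
            + ‖A ((Ring.inverse (opT A α) ^ (k+1)) (A.adjoint ((B - A) w)))‖ :=
          norm_add_le _ _
      _ ≤ 2 * ((Real.sqrt α)⁻¹ * α⁻¹ ^ n * (‖B - A‖ * ‖y‖)) := by linarith
  have hsum : ‖∑ k ∈ Finset.range (n+1),
      A ((R ^ (k+1) * (opT B α - opT A α) * V ^ (n+1-k)) (B.adjoint y))‖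
        ≤ (n+1 : ℝ) * (2 * ((Real.sqrt α)⁻¹ * α⁻¹ ^ n * (‖B - A‖ * ‖y‖))) := by
    calc ‖∑ k ∈ Finset.range (n+1),
        A ((R ^ (k+1) * (opT B α - opT A α) * V ^ (n+1-k)) (B.adjoint y))‖
        ≤ ∑ k ∈ Finset.range (n+1),
            ‖A ((R ^ (k+1) * (opT B α - opT A α) * V ^ (n+1-k)) (B.adjoint y))‖ :=
          norm_sum_le _ _
      _ ≤ ∑ _k ∈ Finset.range (n+1), 2 * ((Real.sqrt α)⁻¹ * α⁻¹ ^ n * (‖B - A‖ * ‖y‖)) :=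
          Finset.sum_le_sum hterm
      _ = (n+1 : ℝ) * (2 * ((Real.sqrt α)⁻¹ * α⁻¹ ^ n * (‖B - A‖ * ‖y‖))) := by
          rw [Finset.sum_const, Finset.card_range, nsmul_eq_mul]
          push_cast
          ring
  calc α ^ (n+1) * ‖∑ k ∈ Finset.range (n+1),
      A ((R ^ (k+1) * (opT B α - opT A α) * V ^ (n+1-k)) (B.adjoint y))‖
      ≤ α ^ (n+1) * ((n+1 : ℝ) * (2 * ((Real.sqrt α)⁻¹ * α⁻¹ ^ n * (‖B - A‖ * ‖y‖)))) :=
        mul_le_mul_of_nonneg_left hsum (by positivity)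
    _ = 2 * (n+1 : ℝ) * Real.sqrt α * ‖A - B‖ * ‖y‖ := by
        rw [norm_sub_rev B A]
        have hpow : α ^ (n+1) * α⁻¹ ^ n = α := by
          rw [inv_pow, pow_succ]
          field_simp
        have hsa : α * (Real.sqrt α)⁻¹ = Real.sqrt α := by
          rw [← hs]
          field_simp
          rw [Real.sqrt_sq hs0.le]
        calc α ^ (n+1) * ((n+1 : ℝ) * (2 * ((Real.sqrt α)⁻¹ * α⁻¹ ^ n * (‖A - B‖ * ‖y‖))))
            = (α ^ (n+1) * α⁻¹ ^ n) * (Real.sqrt α)⁻¹ * ((n+1 : ℝ) * 2 * (‖A - B‖ * ‖y‖)) := by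
              ring
          _ = α * (Real.sqrt α)⁻¹ * ((n+1 : ℝ) * 2 * (‖A - B‖ * ‖y‖)) := by rw [hpow]
          _ = Real.sqrt α * ((n+1 : ℝ) * 2 * (‖A - B‖ * ‖y‖)) := by rw [hsa]
          _ = 2 * (n+1 : ℝ) * Real.sqrt α * ‖A - B‖ * ‖y‖ := by ring
    _ = 2 * (↑(n+1) : ℝ) * Real.sqrt α * ‖A - B‖ * ‖y‖ := by push_cast; ring
end
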